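/- Let E be a trace-preserving super-operator on D×D complex matrices, P a projection, and σ₀ a density matrix. Then supp(E^k(σ₀)) ⊆ range(P) for all k ≥ 0 if and only if supp(Σ_{k=0}^{D−1} E^k(σ₀)) ⊆ range(P), i.e., the invariance property □P holds for the orbit of σ₀ under E if and only if the average of the first D iterates satisfies P. -/

import Mathlib

/-! For positive semidefinite `ρ`, the range of `N ρ Nᴴ` is `N (range ρ)`, and the range of a sum
of positive semidefinite matrices is the span of their ranges. Hence the support of `E^k(σ₀)` is
`F^k(V)`, where `V = supp σ₀` and `F(S) = Σᵢ Eᵢ S` acts on subspaces, and the support of the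
partial sum is the Krylov space `V + F V + ⋯ + F^(D-1) V`. Once one step fails to enlarge these
increasing Krylov spaces, they are `F`-invariant and contain every `F^k(V)`; and a strictly
increasing chain of subspaces of `ℂ^D` starting at `0` has at most `D` steps. -/

open Matrix ComplexOrder

/-- The super-operator with Kraus operators `(E_i)`: `ρ ↦ Σ_i E_i ρ E_iᴴ`. -/
noncomputable def superOp {D : ℕ} {I : Type} [Fintype I]
    (E : I → Matrix (Fin D) (Fin D) ℂ) (ρ : Matrix (Fin D) (Fin D) ℂ) :
    Matrix (Fin D) (Fin D) ℂ :=
  ∑ i, E i * ρ * (E i)ᴴ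

open Module

theorem LinearMap.exists_eq_comp_of_ker_le {K V W : Type*} [DivisionRing K]
    [AddCommGroup V] [Module K V] [AddCommGroup W] [Module K W] {f g : V →ₗ[K] W}
    (h : LinearMap.ker g ≤ LinearMap.ker f) : ∃ φ : W →ₗ[K] W, f = φ ∘ₗ g := by
  obtain ⟨φ, hφ⟩ := LinearMap.exists_extend
    ((Submodule.liftQ (LinearMap.ker g) f h) ∘ₗ g.quotKerEquivRange.symm.toLinearMap)
  refine ⟨φ, LinearMap.ext fun x => ?_⟩
  have hx := LinearMap.congr_fun hφ ⟨g x, LinearMap.mem_range_self g x⟩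
  simp only [LinearMap.comp_apply, Submodule.subtype_apply, LinearEquiv.coe_coe,
    LinearMap.quotKerEquivRange_symm_apply_image, Submodule.mkQ_apply,
    Submodule.liftQ_apply] at hx
  exact hx.symm

namespace Submodule

variable {K M ι : Type*} [DivisionRing K] [AddCommGroup M] [Module K M]

def mapFamily (f : ι → M →ₗ[K] M) (S : Submodule K M) : Submodule K M :=
  ⨆ i, S.map (f i)

theorem gc_mapFamily (f : ι → M →ₗ[K] M) :
    GaloisConnection (mapFamily f) (fun T => ⨅ i, T.comap (f i)) := fun S T => by
  simp only [mapFamily, iSup_le_iff, le_iInf_iff, map_le_iff_le_comap]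

def krylov (f : ι → M →ₗ[K] M) (S : Submodule K M) (n : ℕ) : Submodule K M :=
  ⨆ k ∈ Finset.range n, (mapFamily f)^[k] S

variable (f : ι → M →ₗ[K] M) (S : Submodule K M)

theorem iterate_le_krylov {k n : ℕ} (hk : k < n) : (mapFamily f)^[k] S ≤ krylov f S n :=
  le_iSup₂_of_le k (Finset.mem_range.mpr hk) le_rfl

theorem krylov_mono : Monotone (krylov f S) := fun _ _ hmn =>
  iSup₂_le fun _ hk => iterate_le_krylov f S ((Finset.mem_range.mp hk).trans_le hmn)

theorem mapFamily_krylov_le (n : ℕ) : mapFamily f (krylov f S n) ≤ krylov f S (n + 1) := by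
  rw [krylov, (gc_mapFamily f).l_iSup₂]
  refine iSup₂_le fun k hk => ?_
  rw [← Function.iterate_succ_apply' (mapFamily f)]
  exact iterate_le_krylov f S (Nat.succ_lt_succ (Finset.mem_range.mp hk))

theorem iterate_le_krylov_of_krylov_succ_eq {n : ℕ} (h : krylov f S (n + 1) = krylov f S n)
    (k : ℕ) : (mapFamily f)^[k] S ≤ krylov f S n := by
  induction k with
  | zero => exact h ▸ iterate_le_krylov f S n.succ_pos
  | succ k ih =>
    rw [Function.iterate_succ_apply']
    exact ((gc_mapFamily f).monotone_l ih).trans (h ▸ mapFamily_krylov_le f S n)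

/-- Until it stabilises, the Krylov chain grows by at least one dimension per step, so it
stabilises after at most `finrank K M` steps. -/
theorem iterate_le_krylov_finrank [FiniteDimensional K M] (k : ℕ) :
    (mapFamily f)^[k] S ≤ krylov f S (finrank K M) := by
  by_cases hstab : ∃ m < finrank K M, krylov f S (m + 1) = krylov f S m
  · obtain ⟨m, hm, heq⟩ := hstab
    exact (iterate_le_krylov_of_krylov_succ_eq f S heq k).trans (krylov_mono f S hm.le)
  push Not at hstab
  have hgrow : ∀ n ≤ finrank K M, n ≤ finrank K (krylov f S n) := by
    intro n hn
    induction n with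
    | zero => exact Nat.zero_le _
    | succ n ih =>
      have hlt : krylov f S n < krylov f S (n + 1) :=
        (krylov_mono f S n.le_succ).lt_of_ne' (hstab n hn)
      exact (ih (n.le_succ.trans hn)).trans_lt (Submodule.finrank_lt_finrank_of_lt hlt)
  rw [eq_top_of_finrank_eq ((finrank_le _).antisymm (hgrow _ le_rfl))]
  exact le_top

end Submodule

namespace Matrix

theorem range_mulVecLin_mul_conjTranspose {m n R : Type*} [Fintype m] [Fintype n] [Field R]
    [PartialOrder R] [StarRing R] [StarOrderedRing R] (A : Matrix m n R) :
    LinearMap.range (A * Aᴴ).mulVecLin = LinearMap.range A.mulVecLin := by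
  refine Submodule.eq_of_le_of_finrank_le ?_ (rank_self_mul_conjTranspose A).ge
  rw [mulVecLin_mul]
  exact LinearMap.range_comp_le_range _ _

variable {𝕜 n : Type*} [RCLike 𝕜] [Fintype n]

/-- Hermitian `A = Aᴴ` factors as `M * Cᴴ` once it factors as `C * M` through the kernel of `M`. -/
theorem IsHermitian.range_mulVecLin_le_of_ker_le {A M : Matrix n n 𝕜} (hA : A.IsHermitian)
    (hM : M.IsHermitian) (h : LinearMap.ker M.mulVecLin ≤ LinearMap.ker A.mulVecLin) :
    LinearMap.range A.mulVecLin ≤ LinearMap.range M.mulVecLin := by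
  classical
  obtain ⟨φ, hφ⟩ := LinearMap.exists_eq_comp_of_ker_le h
  have hA_eq : A = M * (LinearMap.toMatrix' φ)ᴴ := by
    have hmat : A = LinearMap.toMatrix' φ * M := by
      simpa only [LinearMap.toMatrix'_comp, ← toLin'_apply', LinearMap.toMatrix'_toLin']
        using congrArg LinearMap.toMatrix' hφ
    rw [← hA, hmat, conjTranspose_mul, hM]
  rw [hA_eq, mulVecLin_mul]
  exact LinearMap.range_comp_le_range _ _

theorem range_mulVecLin_sum_of_posSemidef {α : Type*} (s : Finset α) {A : α → Matrix n n 𝕜}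
    (hA : ∀ a ∈ s, (A a).PosSemidef) :
    LinearMap.range (∑ a ∈ s, A a).mulVecLin = ⨆ a ∈ s, LinearMap.range (A a).mulVecLin := by
  have hsum : (∑ a ∈ s, A a).PosSemidef := posSemidef_sum s hA
  refine le_antisymm ?_ (iSup₂_le fun a ha => ?_)
  · rintro _ ⟨x, rfl⟩
    rw [mulVecLin_apply, sum_mulVec]
    exact Submodule.sum_mem _ fun a ha =>
      le_iSup₂ (f := fun a _ => LinearMap.range (A a).mulVecLin) a ha
        (LinearMap.mem_range_self _ x)
  · refine (hA a ha).isHermitian.range_mulVecLin_le_of_ker_le hsum.isHermitian fun x hx => ?_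
    simp only [LinearMap.mem_ker, mulVecLin_apply] at hx ⊢
    have hzero : ∑ b ∈ s, star x ⬝ᵥ A b *ᵥ x = 0 := by
      rw [← dotProduct_sum, ← sum_mulVec, hx, dotProduct_zero]
    rw [← (hA a ha).dotProduct_mulVec_zero_iff]
    exact (Finset.sum_eq_zero_iff_of_nonneg fun b hb =>
      (hA b hb).dotProduct_mulVec_nonneg x).mp hzero a ha

open scoped MatrixOrder in
theorem PosSemidef.range_mulVecLin_mul_mul_conjTranspose {m : Type*} [Fintype m]
    {A : Matrix n n 𝕜} (hA : A.PosSemidef) (N : Matrix m n 𝕜) :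
    LinearMap.range (N * A * Nᴴ).mulVecLin = (LinearMap.range A.mulVecLin).map N.mulVecLin := by
  classical
  obtain ⟨B, rfl⟩ := CStarAlgebra.nonneg_iff_eq_star_mul_self.mp hA.nonneg
  have hNB : N * (star B * B) * Nᴴ = (N * Bᴴ) * (N * Bᴴ)ᴴ := by
    simp only [star_eq_conjTranspose, conjTranspose_mul, conjTranspose_conjTranspose,
      Matrix.mul_assoc]
  have hB : star B * B = Bᴴ * Bᴴᴴ := by rw [conjTranspose_conjTranspose, star_eq_conjTranspose]
  rw [hNB, range_mulVecLin_mul_conjTranspose, mulVecLin_mul, LinearMap.range_comp, hB,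
    range_mulVecLin_mul_conjTranspose]

end Matrix

section SuperOp

open Submodule

variable {D : ℕ} {I : Type} [Fintype I] (E : I → Matrix (Fin D) (Fin D) ℂ)

theorem posSemidef_iterate_superOp {ρ : Matrix (Fin D) (Fin D) ℂ} (hρ : ρ.PosSemidef) (k : ℕ) :
    ((superOp E)^[k] ρ).PosSemidef := by
  induction k with
  | zero => exact hρ
  | succ k ih =>
    rw [Function.iterate_succ_apply']
    exact posSemidef_sum _ fun i _ => ih.mul_mul_conjTranspose_same (E i)

theorem range_superOp {ρ : Matrix (Fin D) (Fin D) ℂ} (hρ : ρ.PosSemidef) :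
    LinearMap.range (superOp E ρ).mulVecLin
      = mapFamily (fun i => (E i).mulVecLin) (LinearMap.range ρ.mulVecLin) := by
  rw [superOp, range_mulVecLin_sum_of_posSemidef _ fun i _ => hρ.mul_mul_conjTranspose_same (E i)]
  simp only [hρ.range_mulVecLin_mul_mul_conjTranspose, Finset.mem_univ, iSup_pos, mapFamily]

theorem range_iterate_superOp {ρ : Matrix (Fin D) (Fin D) ℂ} (hρ : ρ.PosSemidef) (k : ℕ) :
    LinearMap.range ((superOp E)^[k] ρ).mulVecLin
      = (mapFamily fun i => (E i).mulVecLin)^[k] (LinearMap.range ρ.mulVecLin) := by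
  induction k with
  | zero => rfl
  | succ k ih =>
    rw [Function.iterate_succ_apply', Function.iterate_succ_apply',
      range_superOp E (posSemidef_iterate_superOp E hρ k), ih]

end SuperOp

theorem invariance_iff_sum_first_D_iterates_general {D : ℕ} {I : Type} [Fintype I]
    (E : I → Matrix (Fin D) (Fin D) ℂ)
    (P : Matrix (Fin D) (Fin D) ℂ)
    (σ₀ : Matrix (Fin D) (Fin D) ℂ) (hσ₀ : σ₀.PosSemidef) :
    (∀ k : ℕ, LinearMap.range ((superOp E)^[k] σ₀).mulVecLin
        ≤ LinearMap.range P.mulVecLin) ↔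
      LinearMap.range (∑ k ∈ Finset.range D, (superOp E)^[k] σ₀).mulVecLin
        ≤ LinearMap.range P.mulVecLin := by
  rw [range_mulVecLin_sum_of_posSemidef _ fun k _ => posSemidef_iterate_superOp E hσ₀ k]
  simp only [range_iterate_superOp E hσ₀]
  refine ⟨fun h => iSup₂_le fun k _ => h k, fun h k => ?_⟩
  have hkrylov := Submodule.iterate_le_krylov_finrank (fun i => (E i).mulVecLin)
    (LinearMap.range σ₀.mulVecLin) k
  rw [finrank_fin_fun] at hkrylov
  exact hkrylov.trans h

/-- For a trace-preserving super-operator `E` on `D×D` matrices, a projection `P`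
and a density matrix `σ₀`: `supp(E^k(σ₀)) ⊆ range P` for all `k ≥ 0` iff
`supp(Σ_{k=0}^{D−1} E^k(σ₀)) ⊆ range P`. -/
theorem invariance_iff_sum_first_D_iterates {D : ℕ} {I : Type} [Fintype I]
    (E : I → Matrix (Fin D) (Fin D) ℂ)
    (htp : ∑ i, (E i)ᴴ * E i = (1 : Matrix (Fin D) (Fin D) ℂ))
    (P : Matrix (Fin D) (Fin D) ℂ) (hP1 : P.IsHermitian) (hP2 : P * P = P)
    (σ₀ : Matrix (Fin D) (Fin D) ℂ) (hσ₀ : σ₀.PosSemidef) (htr : σ₀.trace = 1) :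
    (∀ k : ℕ, LinearMap.range ((superOp E)^[k] σ₀).mulVecLin
        ≤ LinearMap.range P.mulVecLin) ↔
      LinearMap.range (∑ k ∈ Finset.range D, (superOp E)^[k] σ₀).mulVecLin
        ≤ LinearMap.range P.mulVecLin :=
  invariance_iff_sum_first_D_iterates_general E P σ₀ hσ₀
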